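/- Given a connected weighted graph G and two maximum spanning trees T and T', there exists a finite sequence of maximum spanning trees T_0 = T, T_1, ..., T_k = T' such that dist(T_{i-1}, T_i) = 1 for all i from 1 to k. -/

import Mathlib

/-- `E'` is (the edge set of) a spanning tree of `G`. -/
def IsSpanningTree {V : Type*} (G : SimpleGraph V) (E' : Finset (Sym2 V)) : Prop :=
  (E' : Set (Sym2 V)) ⊆ G.edgeSet ∧ (SimpleGraph.fromEdgeSet (E' : Set (Sym2 V))).IsTree

/-- `E'` is a maximum spanning tree of `G` with respect to the weights `w`. -/
def IsMaxSpanningTree {V : Type*} (G : SimpleGraph V) (w : Sym2 V → ℝ)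
    (E' : Finset (Sym2 V)) : Prop :=
  IsSpanningTree G E' ∧
    ∀ E'' : Finset (Sym2 V), IsSpanningTree G E'' → ∑ e ∈ E'', w e ≤ ∑ e ∈ E', w e

/-!
Induct on `|T \ T'|`. For `e = s(x, y) ∈ T \ T'`, the `T'`-path from `x` to `y` contains an edge
`f ∈ T'` joining the two components of `T - e`. Then `T - e + f` and `T' - f + e` are both spanning
trees, so maximality of `T` and of `T'` forces `w f = w e`, and `T - e + f` is a maximum spanning
tree one exchange away from `T` and one edge closer to `T'`.
-/

theorem Relation.ReflTransGen.exists_seq {α : Type*} {r : α → α → Prop} {a b : α}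
    (h : Relation.ReflTransGen r a b) :
    ∃ (k : ℕ) (f : ℕ → α), f 0 = a ∧ f k = b ∧ ∀ i < k, r (f i) (f (i + 1)) := by
  induction h with
  | refl => exact ⟨0, fun _ => a, rfl, rfl, by simp⟩
  | @tail c d _ hcd ih =>
    obtain ⟨k, f, h0, hk, hf⟩ := ih
    refine ⟨k + 1, fun i => if i ≤ k then f i else d, by simp [h0], by simp, fun i hi => ?_⟩
    rcases (Nat.lt_succ_iff.1 hi).lt_or_eq with hi | rfl
    · simpa [hi.le, Nat.succ_le_of_lt hi] using hf i hi
    · simpa [hk] using hcd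

theorem Finset.sum_insert_erase {α β : Type*} [DecidableEq α] [AddCommGroup β] {s : Finset α}
    {a b : α} (f : α → β) (ha : a ∈ s) (hb : b ∉ s) :
    ∑ x ∈ insert b (s.erase a), f x = ∑ x ∈ s, f x - f a + f b := by
  rw [Finset.sum_insert (fun h => hb (Finset.mem_of_mem_erase h)), ← Finset.sum_erase_add s f ha]
  abel

namespace SimpleGraph

variable {V : Type*} {H : SimpleGraph V}

theorem Preconnected.reachable_deleteEdges_left_or_right (hH : H.Preconnected) (x y v : V) :
    (H.deleteEdges {s(x, y)}).Reachable x v ∨ (H.deleteEdges {s(x, y)}).Reachable y v := by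
  by_contra! ⟨hx, hy⟩
  obtain ⟨p⟩ := hH x v
  let S := {u | (H.deleteEdges {s(x, y)}).Reachable x u ∨ (H.deleteEdges {s(x, y)}).Reachable y u}
  obtain ⟨d, -, hd, hd'⟩ := p.exists_boundary_dart S (Or.inl .rfl) (by simp [S, hx, hy])
  apply hd'
  by_cases hxy : s(d.fst, d.snd) = s(x, y)
  · rcases Sym2.eq_iff.1 hxy with ⟨-, rfl⟩ | ⟨-, rfl⟩
    · exact Or.inr .rfl
    · exact Or.inl .rfl
  · have hadj : (H.deleteEdges {s(x, y)}).Adj d.fst d.snd := by simp [d.adj, hxy]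
    exact hd.imp (·.trans hadj.reachable) (·.trans hadj.reachable)

theorem IsAcyclic.not_reachable_deleteEdges_of_mem_edges [DecidableEq V] (hH : H.IsAcyclic)
    {x y a b : V} {p : H.Walk x y} (hp : p.IsPath) (hab : s(a, b) ∈ p.edges) :
    ¬(H.deleteEdges {s(a, b)}).Reachable x y := by
  rw [reachable_deleteEdges_iff_exists_walk]
  rintro ⟨q, hq⟩
  have hqp : q.toPath = ⟨p, hp⟩ := (hH.subsingleton_path x y).elim _ _
  exact hq (q.edges_toPath_subset_edges (by rw [hqp]; exact hab))

theorem IsTree.sup_edge_deleteEdges (hH : H.IsTree) {x y a b : V}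
    (hab : ¬(H.deleteEdges {s(x, y)}).Reachable a b) :
    (H.deleteEdges {s(x, y)} ⊔ edge a b).IsTree := by
  set H' := H.deleteEdges {s(x, y)}
  have hle : H' ≤ H' ⊔ edge a b := le_sup_left
  have hab' : (H' ⊔ edge a b).Reachable a b :=
    Adj.reachable (Or.inr ((edge_adj a b a b).2 ⟨Or.inl ⟨rfl, rfl⟩, fun h => hab (h ▸ .rfl)⟩))
  have side := hH.connected.preconnected.reachable_deleteEdges_left_or_right x y
  have hxy : (H' ⊔ edge a b).Reachable x y := by
    rcases side a with hxa | hya <;> rcases side b with hxb | hyb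
    · exact absurd (hxa.symm.trans hxb) hab
    · exact (hxa.mono hle).trans (hab'.trans (hyb.symm.mono hle))
    · exact (hxb.mono hle).trans (hab'.symm.trans (hya.symm.mono hle))
    · exact absurd (hya.symm.trans hyb) hab
  have hx : ∀ v, (H' ⊔ edge a b).Reachable x v := fun v =>
    (side v).elim (·.mono hle) (fun hyv => hxy.trans (hyv.mono hle))
  refine ⟨(connected_iff _).2 ⟨fun u v => (hx u).symm.trans (hx v), ⟨x⟩⟩, ?_⟩
  exact (hH.isAcyclic.anti (deleteEdges_le _)).sup_edge_of_not_reachable hab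

theorem fromEdgeSet_insert_erase [DecidableEq V] (T : Finset (Sym2 V)) (x y a b : V) :
    fromEdgeSet ↑(insert s(a, b) (T.erase s(x, y))) =
      (fromEdgeSet ↑T).deleteEdges {s(x, y)} ⊔ edge a b := by
  rw [Finset.coe_insert, Finset.coe_erase, Set.insert_eq, Set.union_comm, fromEdgeSet_union,
    fromEdgeSet_sdiff]
  rfl

end SimpleGraph

open SimpleGraph

section SpanningTree

variable {V : Type*} {G : SimpleGraph V}

theorem IsSpanningTree.eq_of_subset {T T' : Finset (Sym2 V)} (hT : IsSpanningTree G T)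
    (hT' : IsSpanningTree G T') (h : T ⊆ T') : T = T' := by
  refine h.antisymm fun e he => ?_
  have hle : fromEdgeSet (T' : Set (Sym2 V)) ≤ fromEdgeSet T :=
    (isTree_iff_minimal_connected.1 hT'.2).2 hT.2.connected (fromEdgeSet_mono (by simpa))
  have he' : e ∈ (fromEdgeSet (T' : Set (Sym2 V))).edgeSet := by
    rw [edgeSet_fromEdgeSet]
    exact ⟨he, G.not_isDiag_of_mem_edgeSet (hT'.1 he)⟩
  have := edgeSet_mono hle he'
  rw [edgeSet_fromEdgeSet] at this
  exact this.1

variable [DecidableEq V]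

theorem IsSpanningTree.exchange {T : Finset (Sym2 V)} (hT : IsSpanningTree G T) {x y a b : V}
    (hab : s(a, b) ∈ G.edgeSet) (hsep : ¬((fromEdgeSet ↑T).deleteEdges {s(x, y)}).Reachable a b) :
    IsSpanningTree G (insert s(a, b) (T.erase s(x, y))) := by
  refine ⟨?_, ?_⟩
  · simp only [Finset.coe_insert, Finset.coe_erase, Set.insert_subset_iff]
    exact ⟨hab, Set.sdiff_subset.trans hT.1⟩
  · rw [fromEdgeSet_insert_erase]
    exact hT.2.sup_edge_deleteEdges hsep

theorem IsMaxSpanningTree.exists_exchange {w : Sym2 V → ℝ} {T T' : Finset (Sym2 V)}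
    (hT : IsMaxSpanningTree G w T) (hT' : IsMaxSpanningTree G w T') {e : Sym2 V}
    (heT : e ∈ T) (heT' : e ∉ T') :
    ∃ f ∈ T', f ∉ T ∧ IsMaxSpanningTree G w (insert f (T.erase e)) := by
  induction e using Sym2.ind with | _ x y => ?_
  set H := fromEdgeSet (T : Set (Sym2 V))
  have hxy : ¬(H.deleteEdges {s(x, y)}).Reachable x y := by
    refine isAcyclic_iff_forall_adj_isBridge.1 hT.1.2.isAcyclic ?_
    exact (fromEdgeSet_adj _).2 ⟨heT, G.ne_of_adj (hT.1.1 heT)⟩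
  obtain ⟨p, hp, -⟩ := hT'.1.2.existsUnique_path x y
  obtain ⟨⟨⟨a, b⟩, hab⟩, hd, hxa, hxb⟩ :=
    p.exists_boundary_dart {v | (H.deleteEdges {s(x, y)}).Reachable x v} .rfl hxy
  have hsep : ¬(H.deleteEdges {s(x, y)}).Reachable a b := fun h => hxb (hxa.trans h)
  have hfT' : s(a, b) ∈ T' := ((fromEdgeSet_adj _).1 hab).1
  have hfe : s(a, b) ≠ s(x, y) := fun h => heT' (h ▸ hfT')
  have hfT : s(a, b) ∉ T := fun hf => hsep <| Adj.reachable <|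
    (deleteEdges_adj ..).2 ⟨(fromEdgeSet_adj _).2 ⟨hf, hab.ne⟩, hfe⟩
  have hfp : s(a, b) ∈ p.edges := by
    rw [p.edges_eq_map_darts]
    exact List.mem_map_of_mem hd
  have hT₁ := hT.1.exchange (hT'.1.1 hfT') hsep
  have hT₂ := hT'.1.exchange (hT.1.1 heT)
    (hT'.1.2.isAcyclic.not_reachable_deleteEdges_of_mem_edges hp hfp)
  have hw : w s(a, b) = w s(x, y) := by
    have h₁ := hT.2 _ hT₁
    have h₂ := hT'.2 _ hT₂
    rw [Finset.sum_insert_erase w heT hfT] at h₁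
    rw [Finset.sum_insert_erase w hfT' heT'] at h₂
    linarith
  refine ⟨s(a, b), hfT', hfT, hT₁, fun S hS => ?_⟩
  rw [Finset.sum_insert_erase w heT hfT, hw, sub_add_cancel]
  exact hT.2 S hS

theorem IsMaxSpanningTree.reflTransGen_exchange {w : Sym2 V → ℝ} {T T' : Finset (Sym2 V)}
    (hT : IsMaxSpanningTree G w T) (hT' : IsMaxSpanningTree G w T') :
    Relation.ReflTransGen (fun S S' => IsMaxSpanningTree G w S' ∧ (S \ S').card = 1) T T' := by
  induction hn : (T \ T').card using Nat.strong_induction_on generalizing T with | _ n ih => ?_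
  obtain hsub | ⟨e, he⟩ := (T \ T').eq_empty_or_nonempty
  · rw [hT.1.eq_of_subset hT'.1 (Finset.sdiff_eq_empty_iff_subset.1 hsub)]
  obtain ⟨heT, heT'⟩ := Finset.mem_sdiff.1 he
  obtain ⟨f, hfT', hfT, hmax⟩ := hT.exists_exchange hT' heT heT'
  have hstep : T \ insert f (T.erase e) = {e} := by
    ext; simp only [Finset.mem_sdiff, Finset.mem_insert, Finset.mem_erase, Finset.mem_singleton]
    grind
  have hrest : insert f (T.erase e) \ T' = (T \ T').erase e := by
    ext; simp only [Finset.mem_sdiff, Finset.mem_insert, Finset.mem_erase]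
    grind
  refine .head ⟨hmax, by rw [hstep, Finset.card_singleton]⟩ (ih _ ?_ hmax rfl)
  rw [hrest, ← hn]
  exact Finset.card_erase_lt_of_mem he

end SpanningTree

theorem maxSpanningTree_connected_by_exchanges_general {V : Type*} [DecidableEq V]
    (G : SimpleGraph V) (w : Sym2 V → ℝ)
    (ET ET' : Finset (Sym2 V))
    (hT : IsMaxSpanningTree G w ET) (hT' : IsMaxSpanningTree G w ET') :
    ∃ (k : ℕ) (f : ℕ → Finset (Sym2 V)), f 0 = ET ∧ f k = ET' ∧
      (∀ i ≤ k, IsMaxSpanningTree G w (f i)) ∧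
      (∀ i, 1 ≤ i → i ≤ k → ((f (i - 1)) \ (f i)).card = 1) := by
  obtain ⟨k, f, hf0, hfk, hstep⟩ := (hT.reflTransGen_exchange hT').exists_seq
  refine ⟨k, f, hf0, hfk, fun i hi => ?_, fun i hi hik => ?_⟩
  · cases i with
    | zero => exact hf0 ▸ hT
    | succ i => exact (hstep i (by omega)).1
  · obtain ⟨j, rfl⟩ : ∃ j, i = j + 1 := ⟨i - 1, by omega⟩
    exact (hstep j (by omega)).2

/-- Given two maximum spanning trees `T`, `T'` of a connected weighted
graph, there is a finite sequence of maximum spanning trees `T_0 = T, ..., T_k = T'`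
with `dist(T_{i-1}, T_i) = 1` for all `1 ≤ i ≤ k`. -/
theorem maxSpanningTree_connected_by_exchanges {V : Type*} [DecidableEq V]
    (G : SimpleGraph V) (hG : G.Connected) (w : Sym2 V → ℝ)
    (ET ET' : Finset (Sym2 V))
    (hT : IsMaxSpanningTree G w ET) (hT' : IsMaxSpanningTree G w ET') :
    ∃ (k : ℕ) (f : ℕ → Finset (Sym2 V)), f 0 = ET ∧ f k = ET' ∧
      (∀ i ≤ k, IsMaxSpanningTree G w (f i)) ∧
      (∀ i, 1 ≤ i → i ≤ k → ((f (i - 1)) \ (f i)).card = 1) :=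
  maxSpanningTree_connected_by_exchanges_general G w ET ET' hT hT'
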